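/- Let G=(V,E) be a finite connected simple graph and let x ∈ V. Then R(G) − 1 ≤ R(G/x) ≤ R(G), where R denotes the radius. -/

import Mathlib

open SimpleGraph

/-!
The projection `V → G / x` that sends the neighbours of `x` to `x` maps every edge to an edge or
to a single vertex, so it does not increase distances; hence `R(G / x) ≤ R(G)`.

Conversely, a walk of `G / x` that avoids `x` is a walk of `G`, and a path of `G / x` starting at
`x` lifts to `G` at the cost of one extra edge. Let `c` be a centre of `G / x` and `k` its
distance to `x`. The first step of a geodesic from `c` to `x` in `G / x` gives a vertex `z` with
`d_G(c, z) ≤ 1` and `d_G(z, x) ≤ k`. Every vertex `b` is then within `ecc(c) + 1` of `z`: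
through `c` if some geodesic from `c` to `b` in `G / x` avoids `x`, and through `x` otherwise.
-/

noncomputable def eccentr {V : Type} (G : SimpleGraph V) (x : V) : ℕ :=
  sSup (Set.range (G.dist x))

noncomputable def grRadius {V : Type} (G : SimpleGraph V) : ℕ :=
  sInf (Set.range (eccentr G))

def ncontract {V : Type} (G : SimpleGraph V) (x : V) :
    SimpleGraph {v : V // ¬ G.Adj x v} where
  Adj a b := G.Adj a.1 b.1 ∨
    (a.1 = x ∧ b.1 ≠ x ∧ ∃ y, G.Adj x y ∧ G.Adj y b.1) ∨
    (b.1 = x ∧ a.1 ≠ x ∧ ∃ y, G.Adj x y ∧ G.Adj y a.1)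
  symm := ⟨fun a b h => by
    rcases h with h | h | h
    · exact Or.inl h.symm
    · exact Or.inr (Or.inr h)
    · exact Or.inr (Or.inl h)⟩
  loopless := ⟨fun a h => by
    rcases h with h | ⟨h1, h2, -⟩ | ⟨h1, h2, -⟩
    · exact G.loopless.irrefl _ h
    · exact h2 h1
    · exact h2 h1⟩

section Eccentricity

variable {V W : Type} {G : SimpleGraph V} {H : SimpleGraph W}

theorem dist_le_eccentr [Finite V] (c b : V) : G.dist c b ≤ eccentr G c :=
  le_csSup (Set.finite_range _).bddAbove (Set.mem_range_self b)

theorem eccentr_le {c : V} {m : ℕ} (h : ∀ b, G.dist c b ≤ m) : eccentr G c ≤ m :=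
  csSup_le' (Set.forall_mem_range.mpr h)

theorem grRadius_le_eccentr (c : V) : grRadius G ≤ eccentr G c :=
  Nat.sInf_le (Set.mem_range_self c)

theorem exists_eccentr_eq_grRadius [Nonempty V] : ∃ c, eccentr G c = grRadius G :=
  Nat.sInf_mem (Set.range_nonempty _)

theorem grRadius_le_of_forall_exists_eccentr_le [Nonempty V] {k : ℕ}
    (h : ∀ c, ∃ c', eccentr H c' ≤ eccentr G c + k) : grRadius H ≤ grRadius G + k := by
  obtain ⟨c, hc⟩ := exists_eccentr_eq_grRadius (G := G)
  obtain ⟨c', hc'⟩ := h c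
  exact (grRadius_le_eccentr c').trans (hc ▸ hc')

end Eccentricity

section AdjOrEq

variable {V W : Type} {G : SimpleGraph V} {H : SimpleGraph W} (f : V → W)

theorem exists_walk_length_le_of_adj_or_eq
    (hf : ∀ ⦃a b⦄, G.Adj a b → f a = f b ∨ H.Adj (f a) (f b)) {a b : V} (p : G.Walk a b) :
    ∃ q : H.Walk (f a) (f b), q.length ≤ p.length := by
  induction p with
  | nil => exact ⟨.nil, le_rfl⟩
  | cons h _ ih =>
    obtain ⟨q, hq⟩ := ih
    rcases hf h with heq | hadj
    · exact ⟨q.copy heq.symm rfl, by simp only [Walk.length_copy, Walk.length_cons]; omega⟩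
    · exact ⟨.cons hadj q, by simp only [Walk.length_cons]; omega⟩

theorem reachable_of_adj_or_eq
    (hf : ∀ ⦃a b⦄, G.Adj a b → f a = f b ∨ H.Adj (f a) (f b)) {a b : V}
    (hr : G.Reachable a b) : H.Reachable (f a) (f b) :=
  let ⟨p⟩ := hr
  let ⟨q, _⟩ := exists_walk_length_le_of_adj_or_eq f hf p
  ⟨q⟩

theorem dist_le_dist_of_adj_or_eq
    (hf : ∀ ⦃a b⦄, G.Adj a b → f a = f b ∨ H.Adj (f a) (f b)) {a b : V}
    (hr : G.Reachable a b) :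
    H.dist (f a) (f b) ≤ G.dist a b := by
  obtain ⟨p, hp⟩ := hr.exists_walk_length_eq_dist
  obtain ⟨q, hq⟩ := exists_walk_length_le_of_adj_or_eq f hf p
  exact (dist_le q).trans (hp ▸ hq)

end AdjOrEq

section Contraction

variable {V : Type} {G : SimpleGraph V} {x : V}

def ncontractPoint (G : SimpleGraph V) (x : V) : {v : V // ¬ G.Adj x v} := ⟨x, G.irrefl⟩

open Classical in
noncomputable def ncontractProj (G : SimpleGraph V) (x : V) (v : V) :
    {v : V // ¬ G.Adj x v} :=
  if h : G.Adj x v then ncontractPoint G x else ⟨v, h⟩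

theorem ncontractProj_of_not_adj {v : V} (h : ¬ G.Adj x v) : ncontractProj G x v = ⟨v, h⟩ :=
  dif_neg h

theorem ncontractProj_of_adj {v : V} (h : G.Adj x v) :
    ncontractProj G x v = ncontractPoint G x :=
  dif_pos h

theorem ncontractProj_adj {a b : V} (h : G.Adj a b) :
    ncontractProj G x a = ncontractProj G x b ∨
      (ncontract G x).Adj (ncontractProj G x a) (ncontractProj G x b) := by
  by_cases hxa : G.Adj x a <;> by_cases hxb : G.Adj x b
  · exact .inl (by rw [ncontractProj_of_adj hxa, ncontractProj_of_adj hxb])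
  · rw [ncontractProj_of_adj hxa, ncontractProj_of_not_adj hxb]
    by_cases hbx : b = x
    · exact .inl (Subtype.ext hbx.symm)
    · exact .inr (.inr (.inl ⟨rfl, hbx, a, hxa, h⟩))
  · rw [ncontractProj_of_not_adj hxa, ncontractProj_of_adj hxb]
    by_cases hax : a = x
    · exact .inl (Subtype.ext hax)
    · exact .inr (.inr (.inr ⟨rfl, hax, b, hxb, h.symm⟩))
  · rw [ncontractProj_of_not_adj hxa, ncontractProj_of_not_adj hxb]
    exact .inr (.inl h)

theorem ncontract_connected (hconn : G.Connected) : (ncontract G x).Connected := by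
  refine (connected_iff _).mpr ⟨fun a b => ?_, ⟨ncontractPoint G x⟩⟩
  have :=
    reachable_of_adj_or_eq (ncontractProj G x) (fun _ _ => ncontractProj_adj) (hconn a.1 b.1)
  rwa [ncontractProj_of_not_adj a.2, ncontractProj_of_not_adj b.2] at this

theorem eccentr_ncontract_ncontractProj_le [Finite V] (hconn : G.Connected) (c : V) :
    eccentr (ncontract G x) (ncontractProj G x c) ≤ eccentr G c := by
  refine eccentr_le fun b => ?_
  have :=
    dist_le_dist_of_adj_or_eq (ncontractProj G x) (fun _ _ => ncontractProj_adj) (hconn c b.1)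
  rw [ncontractProj_of_not_adj b.2] at this
  exact this.trans (dist_le_eccentr c b.1)

theorem adj_of_ncontract_adj {a b : {v : V // ¬ G.Adj x v}} (h : (ncontract G x).Adj a b)
    (ha : a ≠ ncontractPoint G x) (hb : b ≠ ncontractPoint G x) : G.Adj a.1 b.1 := by
  rcases h with h | ⟨h, -, -⟩ | ⟨h, -, -⟩
  · exact h
  · exact absurd (Subtype.ext h) ha
  · exact absurd (Subtype.ext h) hb

theorem exists_adj_adj_of_ncontract_adj_ncontractPoint {b : {v : V // ¬ G.Adj x v}}
    (h : (ncontract G x).Adj (ncontractPoint G x) b) : ∃ y, G.Adj x y ∧ G.Adj y b.1 := by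
  rcases h with h | ⟨-, -, h⟩ | ⟨-, hne, -⟩
  · exact absurd h b.2
  · exact h
  · exact absurd rfl hne

theorem exists_walk_of_ncontractPoint_not_mem {a b : {v : V // ¬ G.Adj x v}}
    (p : (ncontract G x).Walk a b) (hp : ncontractPoint G x ∉ p.support) :
    ∃ q : G.Walk a.1 b.1, q.length = p.length := by
  induction p with
  | nil => exact ⟨.nil, rfl⟩
  | cons h p ih =>
    simp only [Walk.support_cons, List.mem_cons, not_or] at hp
    obtain ⟨hpa, hpp⟩ := hp
    obtain ⟨q, hq⟩ := ih hpp
    have hadj := adj_of_ncontract_adj h (Ne.symm hpa) fun h' => hpp (h' ▸ p.start_mem_support)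
    exact ⟨.cons hadj q, by simp [hq]⟩

theorem dist_le_of_ncontractPoint_not_mem {a b : {v : V // ¬ G.Adj x v}}
    (p : (ncontract G x).Walk a b) (hp : ncontractPoint G x ∉ p.support) :
    G.dist a.1 b.1 ≤ p.length :=
  let ⟨q, hq⟩ := exists_walk_of_ncontractPoint_not_mem p hp
  hq ▸ dist_le q

theorem dist_le_dist_ncontractPoint_add_one (hconn : G.Connected)
    (b : {v : V // ¬ G.Adj x v}) :
    G.dist x b.1 ≤ (ncontract G x).dist (ncontractPoint G x) b + 1 := by
  obtain ⟨p, hp, hlen⟩ :=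
    (ncontract_connected hconn).exists_path_of_dist (ncontractPoint G x) b
  cases p with
  | nil => simp [ncontractPoint]
  | @cons _ w _ h q =>
    rw [Walk.cons_isPath_iff] at hp
    obtain ⟨y, hxy, hyw⟩ := exists_adj_adj_of_ncontract_adj_ncontractPoint h
    have hxw : G.dist x w.1 ≤ 2 := by simpa using dist_le (hxy.toWalk.append hyw.toWalk)
    have hwb := dist_le_of_ncontractPoint_not_mem q hp.2
    have := hconn.dist_triangle (u := x) (v := w.1) (w := b.1)
    simp only [Walk.length_cons] at hlen
    omega

theorem dist_le_or_dist_eq_add_dist (hconn : G.Connected) (a b : {v : V // ¬ G.Adj x v}) :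
    G.dist a.1 b.1 ≤ (ncontract G x).dist a b ∨
      (ncontract G x).dist a b =
        (ncontract G x).dist a (ncontractPoint G x) +
          (ncontract G x).dist (ncontractPoint G x) b := by
  classical
  have hH := ncontract_connected (x := x) hconn
  obtain ⟨p, -, hlen⟩ := hH.exists_path_of_dist a b
  by_cases hmem : ncontractPoint G x ∈ p.support
  · right
    have hsplit := congrArg Walk.length (p.take_spec hmem)
    rw [Walk.length_append] at hsplit
    have := dist_le (p.takeUntil _ hmem)
    have := dist_le (p.dropUntil _ hmem)
    have := hH.dist_triangle (u := a) (v := ncontractPoint G x) (w := b)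
    omega
  · exact .inl (hlen ▸ dist_le_of_ncontractPoint_not_mem p hmem)

theorem exists_dist_le_one_dist_le (hconn : G.Connected) (c : {v : V // ¬ G.Adj x v}) :
    ∃ z, G.dist c.1 z ≤ 1 ∧ G.dist z x ≤ (ncontract G x).dist c (ncontractPoint G x) := by
  by_cases hc : c = ncontractPoint G x
  · exact ⟨x, by simp [hc, ncontractPoint], by simp⟩
  obtain ⟨p, hlen⟩ :=
    (ncontract_connected hconn).exists_walk_length_eq_dist c (ncontractPoint G x)
  cases p with
  | nil => exact absurd rfl hc
  | @cons _ w _ h q =>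
    simp only [Walk.length_cons] at hlen
    have hwx : G.dist w.1 x ≤ q.length + 1 := by
      rw [dist_comm]
      exact (dist_le_dist_ncontractPoint_add_one hconn w).trans
        (Nat.add_le_add_right (dist_comm.trans_le (dist_le q)) 1)
    by_cases hw : w = ncontractPoint G x
    · subst hw
      obtain ⟨y, hxy, hyc⟩ := exists_adj_adj_of_ncontract_adj_ncontractPoint h.symm
      exact ⟨y, (dist_eq_one_iff_adj.mpr hyc.symm).le,
        by rw [dist_eq_one_iff_adj.mpr hxy.symm]; omega⟩
    · exact ⟨w.1, (dist_eq_one_iff_adj.mpr (adj_of_ncontract_adj h hc hw)).le, by omega⟩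

theorem exists_eccentr_le_eccentr_ncontract_add_one [Finite V] (hconn : G.Connected)
    (c : {v : V // ¬ G.Adj x v}) : ∃ z, eccentr G z ≤ eccentr (ncontract G x) c + 1 := by
  obtain ⟨z, hcz, hzx⟩ := exists_dist_le_one_dist_le hconn c
  refine ⟨z, eccentr_le fun b => ?_⟩
  have hxr := dist_le_eccentr (G := ncontract G x) c (ncontractPoint G x)
  have hzb := hconn.dist_triangle (u := z) (v := x) (w := b)
  by_cases hb : G.Adj x b
  · rw [dist_eq_one_iff_adj.mpr hb] at hzb
    omega
  have hbr := dist_le_eccentr (G := ncontract G x) c ⟨b, hb⟩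
  rcases dist_le_or_dist_eq_add_dist hconn c ⟨b, hb⟩ with h | h
  · dsimp only at h
    have := hconn.dist_triangle (u := z) (v := c.1) (w := b)
    rw [dist_comm (u := z) (v := c.1)] at this
    omega
  · have := dist_le_dist_ncontractPoint_add_one hconn ⟨b, hb⟩
    dsimp only at this
    omega

end Contraction

theorem stmt_8 {V : Type} [Fintype V] (G : SimpleGraph V) (hconn : G.Connected)
    (x : V) :
    grRadius G ≤ grRadius (ncontract G x) + 1 ∧
      grRadius (ncontract G x) ≤ grRadius G := by
  have : Nonempty {v : V // ¬ G.Adj x v} := ⟨ncontractPoint G x⟩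
  have : Nonempty V := ⟨x⟩
  refine ⟨grRadius_le_of_forall_exists_eccentr_le
    (exists_eccentr_le_eccentr_ncontract_add_one hconn), ?_⟩
  simpa using grRadius_le_of_forall_exists_eccentr_le (k := 0)
    fun c => ⟨ncontractProj G x c, eccentr_ncontract_ncontractProj_le hconn c⟩
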